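/- If D is a pseudo-disk in F(Q_3) with boundary cycle C = ∂D, then the set A_D of vertices of D having an antipode in D equals C. (A vertex v has antipode −v if D = conv(v, −v).) -/

import Mathlib

open Finset

/-- The hypercube graph on subsets of `Fin m`. -/
def cubeGraph (m : ℕ) : SimpleGraph (Finset (Fin m)) where
  Adj A B := (symmDiff A B).card = 1
  symm := ⟨fun A B h => by show (symmDiff B A).card = 1; rwa [symmDiff_comm]⟩
  loopless := ⟨fun A h => by simp only [symmDiff_self, bot_eq_empty, card_empty] at h; exact absurd h (by norm_num)⟩

/-- `V` is (the vertex set of) a partial cube isometrically embedded in `Q_m`: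
the distance in the induced subgraph equals the Hamming distance. -/
def IsPC {m : ℕ} (V : Set (Finset (Fin m))) : Prop :=
  ∀ u v : V, ((cubeGraph m).induce V).dist u v = (symmDiff u.1 v.1).card

def Shatters {m : ℕ} (V : Set (Finset (Fin m))) (Y : Finset (Fin m)) : Prop :=
  ∀ Z ⊆ Y, ∃ B ∈ V, B ∩ Y = Z

def VCdimLE {m : ℕ} (V : Set (Finset (Fin m))) (d : ℕ) : Prop :=
  ∀ Y : Finset (Fin m), Shatters V Y → Y.card ≤ d

inductive PCStep {m : ℕ} : Set (Finset (Fin m)) → Set (Finset (Fin m)) → Prop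
  | contract (i : Fin m) (V : Set (Finset (Fin m))) :
      PCStep V ((fun B => B.erase i) '' V)
  | restrictPos (i : Fin m) (V : Set (Finset (Fin m))) :
      PCStep V {B ∈ V | i ∈ B}
  | restrictNeg (i : Fin m) (V : Set (Finset (Fin m))) :
      PCStep V {B ∈ V | i ∉ B}

/-- Partial-cube minor relation: a sequence of contractions and restrictions. -/
def PCMinor {m : ℕ} : Set (Finset (Fin m)) → Set (Finset (Fin m)) → Prop :=
  Relation.ReflTransGen PCStep

/-- `W` is (the vertex set of) a `k`-dimensional subcube of `Q_m`. -/
def IsCubeFam {m : ℕ} (k : ℕ) (W : Set (Finset (Fin m))) : Prop :=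
  ∃ (Y X : Finset (Fin m)), Disjoint Y X ∧ X.card = k ∧
    W = {B | ∃ Z ⊆ X, B = Y ∪ Z}

/-- `G` has the cube `Q_k` as a pc-minor. -/
def HasQMinor {m : ℕ} (V : Set (Finset (Fin m))) (k : ℕ) : Prop :=
  ∃ W, PCMinor V W ∧ IsCubeFam k W

def hdist {m : ℕ} (A B : Finset (Fin m)) : ℕ := (symmDiff A B).card

def IsConvexIn {m : ℕ} (V S : Set (Finset (Fin m))) : Prop :=
  S ⊆ V ∧ ∀ u ∈ S, ∀ v ∈ S, ∀ x ∈ V, hdist u x + hdist x v = hdist u v → x ∈ S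

def convexHullIn {m : ℕ} (V S : Set (Finset (Fin m))) : Set (Finset (Fin m)) :=
  ⋂₀ {T | S ⊆ T ∧ IsConvexIn V T}

def IsGatedIn {m : ℕ} (V S : Set (Finset (Fin m))) : Prop :=
  S ⊆ V ∧ ∀ x ∈ V, ∃ g ∈ S, ∀ y ∈ S, hdist x g + hdist g y = hdist x y

/-- The standardly embedded full subdivision `SK_n` in `Q_n`: singletons and pairs. -/
def SKset (n : ℕ) : Set (Finset (Fin n)) := {B | B.card = 1 ∨ B.card = 2}

/-- A standardly embedded copy of `SK_n` in `Q_m` along the injection `ι`. -/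
def skCopy {m : ℕ} (n : ℕ) (ι : Fin n → Fin m) : Set (Finset (Fin m)) :=
  (fun B => B.image ι) '' SKset n

/-!
Parametrise the boundary cycle as `c : Fin k → C` with unit steps; `k = 2n` is even because
every step changes `|c i|` by one. As `C` is isometric, `c i` and `c (i + n)` are at distance `n`,
so all of `C` lies in the interval `I(c i, c (i + n))`; intervals are convex, hence contain
`conv C = D`, and every boundary vertex has an antipode.

Conversely let `v ∈ D` have an antipode and let `a = c j` be a boundary vertex nearest to `v`.
If `v ≠ a`, pick a coordinate `p` separating `v` from `a` and let `e₁, e₂` be the coordinates of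
the two boundary edges at `a`. By minimality `e₁, e₂` do not separate `v` from `a`, so `v` and the
two neighbours of `a` flip single coordinates of `Y = {p, e₁, e₂}` relative to `a`, while the
antipodes of `a`, `v` and the neighbours flip all of `Y`. Thus `D` shatters `Y`, contradicting
VC-dimension `2`.
-/

open Fin.NatCast Fin.CommRing

section Hamming

variable {m : ℕ}

lemma card_symmDiff_add_two_mul_card_inter {α : Type*} [DecidableEq α] (s t : Finset α) :
    (symmDiff s t).card + 2 * (s ∩ t).card = s.card + t.card := by
  rw [symmDiff_eq_sup_sdiff_inf, sup_eq_union, inf_eq_inter,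
    card_sdiff_of_subset inter_subset_union, ← card_union_add_card_inter s t]
  have := card_le_card (inter_subset_union (s := s) (t := t))
  omega

lemma hdist_comm (a b : Finset (Fin m)) : hdist a b = hdist b a := by
  rw [hdist, hdist, symmDiff_comm]

lemma hdist_triangle (a b c : Finset (Fin m)) : hdist a c ≤ hdist a b + hdist b c :=
  (card_le_card (symmDiff_triangle a b c)).trans (card_union_le _ _)

lemma hdist_add_hdist (a x b : Finset (Fin m)) :
    hdist a x + hdist x b = hdist a b + 2 * (symmDiff a x ∩ symmDiff x b).card := by
  rw [hdist, hdist, hdist, ← card_symmDiff_add_two_mul_card_inter, symmDiff_assoc,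
    symmDiff_symmDiff_cancel_left]

def hdistInterval (a b : Finset (Fin m)) : Set (Finset (Fin m)) :=
  {x | hdist a x + hdist x b = hdist a b}

lemma mem_hdistInterval_iff {a b x : Finset (Fin m)} :
    x ∈ hdistInterval a b ↔ a ∩ b ⊆ x ∧ x ⊆ a ∪ b := by
  simp only [hdistInterval, hdist_add_hdist, add_eq_left, mul_eq_zero,
    OfNat.ofNat_ne_zero, false_or, card_eq_zero, eq_empty_iff_forall_notMem, subset_iff,
    mem_inter, mem_union, mem_symmDiff, ← forall_and]
  exact forall_congr' fun i => by tauto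

lemma left_mem_hdistInterval (a b : Finset (Fin m)) : a ∈ hdistInterval a b := by
  simp [hdistInterval, hdist]

lemma right_mem_hdistInterval (a b : Finset (Fin m)) : b ∈ hdistInterval a b := by
  simp [hdistInterval, hdist]

lemma hdistInterval_subset_hdistInterval {a b x y : Finset (Fin m)}
    (hx : x ∈ hdistInterval a b) (hy : y ∈ hdistInterval a b) :
    hdistInterval x y ⊆ hdistInterval a b := by
  intro z hz
  rw [mem_hdistInterval_iff, subset_iff, subset_iff] at *
  simp only [mem_inter, mem_union] at *
  exact ⟨fun i hi => hz.1 ⟨hx.1 hi, hy.1 hi⟩, fun i hi => (hz.2 hi).elim (hx.2 ·) (hy.2 ·)⟩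

lemma symmDiff_subset_of_mem_hdistInterval {a b x y : Finset (Fin m)}
    (hx : x ∈ hdistInterval a b) (hy : y ∈ hdistInterval a b) :
    symmDiff x y ⊆ symmDiff a b := by
  rw [mem_hdistInterval_iff, subset_iff, subset_iff] at hx hy
  simp only [subset_iff, mem_symmDiff, mem_inter, mem_union] at *
  intro i
  have := @hx.1 i; have := @hx.2 i; have := @hy.1 i; have := @hy.2 i
  tauto

lemma disjoint_symmDiff_of_hdist_le {v a b : Finset (Fin m)} (hab : hdist a b = 1)
    (h : hdist v a ≤ hdist v b) : Disjoint (symmDiff v a) (symmDiff a b) := by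
  have hsplit := hdist_add_hdist v a b
  have hle : (symmDiff v a ∩ symmDiff a b).card ≤ hdist a b := card_le_card inter_subset_right
  have hvb := hdist_triangle v a b
  rw [disjoint_iff_inter_eq_empty, ← card_eq_zero]
  omega

end Hamming

section Hull

variable {m : ℕ} {D S T : Set (Finset (Fin m))}

lemma subset_convexHullIn : S ⊆ convexHullIn D S :=
  fun _ hx => Set.mem_sInter.mpr fun _ hT => hT.1 hx

lemma convexHullIn_subset (hST : S ⊆ T) (hT : IsConvexIn D T) : convexHullIn D S ⊆ T :=
  Set.sInter_subset_of_mem ⟨hST, hT⟩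

lemma isConvexIn_self : IsConvexIn D D :=
  ⟨subset_rfl, fun _ _ _ _ _ hx _ => hx⟩

lemma isConvexIn_convexHullIn (hS : S ⊆ D) : IsConvexIn D (convexHullIn D S) := by
  refine ⟨convexHullIn_subset hS isConvexIn_self, fun u hu v hv x hx hux => ?_⟩
  exact Set.mem_sInter.mpr fun T hT =>
    hT.2.2 u (Set.mem_sInter.mp hu T hT) v (Set.mem_sInter.mp hv T hT) x hx hux

lemma isConvexIn_inter_hdistInterval (a b : Finset (Fin m)) :
    IsConvexIn D (D ∩ hdistInterval a b) :=
  ⟨Set.inter_subset_left, fun _ hu _ hv _ hx hux =>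
    ⟨hx, hdistInterval_subset_hdistInterval hu.2 hv.2 hux⟩⟩

lemma subset_hdistInterval_of_convexHullIn_eq (hS : convexHullIn D S = D)
    {a b : Finset (Fin m)} (hSab : S ⊆ hdistInterval a b) : D ⊆ hdistInterval a b := by
  have hSD : S ⊆ D := hS ▸ subset_convexHullIn
  rw [← hS]
  exact (convexHullIn_subset (Set.subset_inter hSD hSab)
    (isConvexIn_inter_hdistInterval a b)).trans Set.inter_subset_right

def IsAntipodalIn (D : Set (Finset (Fin m))) (a b : Finset (Fin m)) : Prop :=
  a ∈ D ∧ b ∈ D ∧ D ⊆ hdistInterval a b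

lemma isAntipodalIn_iff {a b : Finset (Fin m)} :
    IsAntipodalIn D a b ↔ a ∈ D ∧ b ∈ D ∧ convexHullIn D {a, b} = D := by
  refine and_congr_right fun ha => and_congr_right fun hb => ⟨fun hD => ?_, fun hD => ?_⟩
  · have hab : ({a, b} : Set (Finset (Fin m))) ⊆ D := Set.pair_subset ha hb
    refine (convexHullIn_subset hab isConvexIn_self).antisymm fun x hx => ?_
    exact (isConvexIn_convexHullIn hab).2 a (subset_convexHullIn (Set.mem_insert a _))
      b (subset_convexHullIn (Set.mem_insert_of_mem a rfl)) x hx (hD hx)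
  · exact subset_hdistInterval_of_convexHullIn_eq hD
      (Set.pair_subset (left_mem_hdistInterval a b) (right_mem_hdistInterval a b))

lemma IsAntipodalIn.symmDiff_subset {a b x y : Finset (Fin m)} (h : IsAntipodalIn D a b)
    (hx : x ∈ D) (hy : y ∈ D) : symmDiff x y ⊆ symmDiff a b :=
  symmDiff_subset_of_mem_hdistInterval (h.2.2 hx) (h.2.2 hy)

end Hull

section Shattering

variable {α : Type*} [DecidableEq α] {m : ℕ}

lemma inter_eq_of_symmDiff_inter_eq {b B Y Z : Finset α} (hZ : Z ⊆ Y)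
    (h : symmDiff b B ∩ Y = symmDiff b Z ∩ Y) : B ∩ Y = Z := by
  ext i
  have hi := congrArg (i ∈ ·) h
  have := @hZ i
  simp only [mem_inter, mem_symmDiff, eq_iff_iff] at hi ⊢
  tauto

lemma symmDiff_inter_eq_sdiff {b B B' Y : Finset α} (hY : Y ⊆ symmDiff B B') :
    symmDiff b B' ∩ Y = Y \ (symmDiff b B ∩ Y) := by
  ext i
  have := @hY i
  simp only [mem_inter, mem_sdiff, mem_symmDiff] at this ⊢
  tauto

/-- Measured from `b`, the given points realise every trace on `Y` of size `≤ 1`, their partners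
the complements of these traces, and for `|Y| ≤ 3` every subset of `Y` is of one of the two
kinds. -/
lemma shatters_of_flips {V : Set (Finset (Fin m))} {Y b : Finset (Fin m)} (hY : Y.card ≤ 3)
    (hb : b ∈ V) (hb' : ∃ b' ∈ V, Y ⊆ symmDiff b b')
    (hflip : ∀ y ∈ Y, ∃ B ∈ V, symmDiff b B ∩ Y = {y} ∧ ∃ B' ∈ V, Y ⊆ symmDiff B B') :
    Shatters V Y := by
  have hsmall : ∀ R ⊆ Y, R.card ≤ 1 →
      ∃ B ∈ V, symmDiff b B ∩ Y = R ∧ ∃ B' ∈ V, Y ⊆ symmDiff B B' := by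
    intro R hRY hR
    obtain hR0 | hR1 : R.card = 0 ∨ R.card = 1 := by omega
    · exact ⟨b, hb, by simp [card_eq_zero.mp hR0], hb'⟩
    · obtain ⟨y, rfl⟩ := card_eq_one.mp hR1
      exact hflip y (singleton_subset_iff.mp hRY)
  have hall : ∀ R ⊆ Y, ∃ B ∈ V, symmDiff b B ∩ Y = R := by
    intro R hRY
    by_cases hR : R.card ≤ 1
    · obtain ⟨B, hB, hBR, -⟩ := hsmall R hRY hR
      exact ⟨B, hB, hBR⟩
    · have hcompl : (Y \ R).card ≤ 1 := by rw [card_sdiff_of_subset hRY]; omega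
      obtain ⟨B, -, hBR, B', hB', hBB'⟩ := hsmall (Y \ R) sdiff_subset hcompl
      refine ⟨B', hB', ?_⟩
      rw [symmDiff_inter_eq_sdiff hBB', hBR, Finset.sdiff_sdiff_eq_self hRY]
  intro Z hZ
  obtain ⟨B, hB, hBZ⟩ := hall _ inter_subset_right
  exact ⟨B, hB, inter_eq_of_symmDiff_inter_eq hZ hBZ⟩

end Shattering

section Antipodes

variable {m : ℕ} {D : Set (Finset (Fin m))}

theorem eq_of_isAntipodalIn_of_hdist_le (hvc : VCdimLE D 2)
    {v w a a' a₁ a₁' a₂ a₂' : Finset (Fin m)} (hv : IsAntipodalIn D v w)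
    (ha : IsAntipodalIn D a a') (ha₁ : IsAntipodalIn D a₁ a₁') (ha₂ : IsAntipodalIn D a₂ a₂')
    (h₁ : hdist a a₁ = 1) (h₂ : hdist a a₂ = 1) (h₁₂ : a₁ ≠ a₂)
    (hmin₁ : hdist v a ≤ hdist v a₁) (hmin₂ : hdist v a ≤ hdist v a₂) : v = a := by
  by_contra hva
  obtain ⟨p, hp⟩ : (symmDiff v a).Nonempty := by
    rw [nonempty_iff_ne_empty, Ne, ← bot_eq_empty, symmDiff_eq_bot]
    exact hva
  obtain ⟨e₁, he₁⟩ := card_eq_one.mp h₁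
  obtain ⟨e₂, he₂⟩ := card_eq_one.mp h₂
  have he₁a : e₁ ∈ symmDiff a a₁ := he₁ ▸ mem_singleton_self e₁
  have he₂a : e₂ ∈ symmDiff a a₂ := he₂ ▸ mem_singleton_self e₂
  have hd₁ := disjoint_symmDiff_of_hdist_le h₁ hmin₁
  have hd₂ := disjoint_symmDiff_of_hdist_le h₂ hmin₂
  have hpe₁ : p ≠ e₁ := fun h => disjoint_left.mp hd₁ hp (h ▸ he₁a)
  have hpe₂ : p ≠ e₂ := fun h => disjoint_left.mp hd₂ hp (h ▸ he₂a)
  have he₁₂ : e₁ ≠ e₂ := by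
    rintro rfl
    rw [← he₂] at he₁
    exact h₁₂ (symmDiff_right_injective a he₁)
  set Y : Finset (Fin m) := {p, e₁, e₂}
  have hYcard : Y.card = 3 := card_eq_three.mpr ⟨p, e₁, e₂, hpe₁, hpe₂, he₁₂, rfl⟩
  have hY : ∀ {x x'}, IsAntipodalIn D x x' → Y ⊆ symmDiff x x' := fun hx => by
    simp only [Y, insert_subset_iff, singleton_subset_iff]
    exact ⟨hx.symmDiff_subset hv.1 ha.1 hp, hx.symmDiff_subset ha.1 ha₁.1 he₁a,
      hx.symmDiff_subset ha.1 ha₂.1 he₂a⟩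
  have hflip : ∀ y ∈ Y, ∃ B ∈ D, symmDiff a B ∩ Y = {y} ∧ ∃ B' ∈ D, Y ⊆ symmDiff B B' := by
    have he₁v : e₁ ∉ symmDiff a v := symmDiff_comm v a ▸ disjoint_right.mp hd₁ he₁a
    have he₂v : e₂ ∉ symmDiff a v := symmDiff_comm v a ▸ disjoint_right.mp hd₂ he₂a
    simp only [Y, mem_insert, mem_singleton, forall_eq_or_imp, forall_eq]
    refine ⟨⟨v, hv.1, ?_, w, hv.2.1, hY hv⟩, ⟨a₁, ha₁.1, ?_, a₁', ha₁.2.1, hY ha₁⟩,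
      ⟨a₂, ha₂.1, ?_, a₂', ha₂.2.1, hY ha₂⟩⟩
    · rw [inter_insert_of_mem (symmDiff_comm v a ▸ hp), inter_insert_of_notMem he₁v,
        inter_singleton_of_notMem he₂v, insert_empty]
    · rw [he₁]; simp
    · rw [he₂]; simp
  have := hvc Y (shatters_of_flips hYcard.le ha.1 ⟨a', ha.2.1, hY ha⟩ hflip)
  omega

end Antipodes

section Cycle

open SimpleGraph

lemma Fin.val_sub_eq_ite {k : ℕ} (a b : Fin k) :
    (a - b).val = if b.val ≤ a.val then a.val - b.val else k + a.val - b.val := by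
  split_ifs with h
  · exact Fin.coe_sub_iff_le.mpr (Fin.le_def.mpr h)
  · exact Fin.coe_sub_iff_lt.mpr (Fin.lt_def.mpr (by omega))

variable {k : ℕ}

def cycDist (i j : Fin k) : ℕ := min (j - i).val (i - j).val

lemma cycDist_le_cycDist_add_one {a b c : Fin k} (hab : (cycleGraph k).Adj a b) :
    cycDist a c ≤ cycDist b c + 1 := by
  rw [cycleGraph_adj'] at hab
  simp only [cycDist, Fin.val_sub_eq_ite] at hab ⊢
  have := a.isLt; have := b.isLt; have := c.isLt
  split_ifs at hab ⊢ <;> omega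

lemma cycDist_le_length {u v : Fin k} (p : (cycleGraph k).Walk u v) :
    cycDist u v ≤ p.length := by
  induction p with
  | nil => simp [cycDist, Fin.val_sub_eq_ite]
  | cons hadj _ ih => exact (cycDist_le_cycDist_add_one hadj).trans (by simpa using ih)

lemma cycleGraph_connected_of_neZero [NeZero k] : (cycleGraph k).Connected := by
  obtain ⟨k', rfl⟩ := Nat.exists_eq_succ_of_ne_zero (NeZero.ne k)
  exact cycleGraph_connected

lemma cycDist_add_half [NeZero k] {n : ℕ} (hkn : k = n + n) (i : Fin k) :
    cycDist i (i + n) = n := by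
  have hneg : i - (i + n) = i + n - i := by
    have : (n : Fin k) + n = 0 := by rw [← Nat.cast_add, ← hkn, Fin.natCast_self]
    linear_combination -this
  rw [cycDist, hneg, min_self, add_sub_cancel_left, Fin.val_cast_of_lt (by omega)]

lemma Fin.add_one_ne_sub_one [NeZero k] (hk : 3 ≤ k) (j : Fin k) : j + 1 ≠ j - 1 := by
  intro h
  have h2 : ((2 : ℕ) : Fin k) = 0 := by push_cast; linear_combination h
  rw [Fin.natCast_eq_zero] at h2
  exact absurd (Nat.le_of_dvd two_pos h2) (by omega)

end Cycle

section BoundaryCycle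

variable {m k : ℕ} [NeZero k]

lemma hdist_symm_add_one {C : Set (Finset (Fin m))} (hk : 2 ≤ k)
    (φ : (cubeGraph m).induce C ≃g SimpleGraph.cycleGraph k) (i : Fin k) :
    hdist (φ.symm i : Finset (Fin m)) (φ.symm (i + 1)) = 1 := by
  refine φ.symm.map_adj_iff.mpr (SimpleGraph.cycleGraph_adj'.mpr (Or.inr ?_))
  rw [add_sub_cancel_left, Fin.val_one', Nat.mod_eq_of_lt (by omega)]

lemma cycDist_le_hdist {C : Set (Finset (Fin m))} (hC : IsPC C)
    (φ : (cubeGraph m).induce C ≃g SimpleGraph.cycleGraph k) (i j : Fin k) :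
    cycDist i j ≤ hdist (φ.symm i : Finset (Fin m)) (φ.symm j) := by
  have hconn := φ.connected_iff.mpr cycleGraph_connected_of_neZero
  obtain ⟨p, hp⟩ := hconn.exists_walk_length_eq_dist (φ.symm i) (φ.symm j)
  have := cycDist_le_length (p.map φ.toHom)
  rw [hdist, ← hC, ← hp]
  simpa using this

variable {c : Fin k → Finset (Fin m)}

lemma even_of_hdist_add_one (hc : ∀ i, hdist (c i) (c (i + 1)) = 1) : Even k := by
  have hparity : ∀ t : ℕ, (c t).card % 2 = ((c 0).card + t) % 2 := by
    intro t
    induction t with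
    | zero => simp
    | succ t ih =>
      have := card_symmDiff_add_two_mul_card_inter (c t) (c (t + 1))
      rw [← hdist, hc] at this
      rw [Nat.cast_succ]
      omega
  have := hparity k
  rw [Fin.natCast_self] at this
  exact Nat.even_iff.mpr (by omega)

lemma hdist_add_natCast_le (hc : ∀ i, hdist (c i) (c (i + 1)) = 1) (i : Fin k) (t : ℕ) :
    hdist (c i) (c (i + t)) ≤ t := by
  induction t with
  | zero => simp [hdist]
  | succ t ih =>
    calc hdist (c i) (c (i + (t + 1 : ℕ)))
        ≤ hdist (c i) (c (i + t)) + hdist (c (i + t)) (c (i + t + 1)) := by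
          rw [Nat.cast_succ, ← add_assoc]; exact hdist_triangle _ _ _
      _ ≤ t + 1 := by rw [hc]; omega

/-- `c j` lies on one of the two arcs of length `n` joining `c i` and `c (i + n)`. -/
lemma mem_hdistInterval_of_hdist_add_one (hc : ∀ i, hdist (c i) (c (i + 1)) = 1) {n : ℕ}
    (hkn : k = n + n) {i : Fin k} (hi : n ≤ hdist (c i) (c (i + n))) (j : Fin k) :
    c j ∈ hdistInterval (c i) (c (i + n)) := by
  set t := (j - i).val with ht
  have hj : j = i + t := by rw [ht, Fin.cast_val_eq_self]; ring
  have htk : t < k := (j - i).isLt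
  have htri := hdist_triangle (c i) (c j) (c (i + n))
  suffices hdist (c i) (c j) + hdist (c j) (c (i + n)) ≤ n by
    show hdist (c i) (c j) + hdist (c j) (c (i + n)) = _
    omega
  rcases le_or_gt t n with htn | htn
  · have h₁ := hdist_add_natCast_le hc i t
    have h₂ := hdist_add_natCast_le hc j (n - t)
    have hjn : j + ((n - t : ℕ) : Fin k) = i + n := by
      rw [hj, add_assoc, ← Nat.cast_add, Nat.add_sub_cancel' htn]
    rw [← hj] at h₁
    rw [hjn] at h₂
    omega
  · have h₁ := hdist_add_natCast_le hc (i + n) (t - n)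
    have h₂ := hdist_add_natCast_le hc j (k - t)
    have hnj : i + n + ((t - n : ℕ) : Fin k) = j := by
      rw [hj, add_assoc, ← Nat.cast_add, Nat.add_sub_cancel' htn.le]
    have hji : j + ((k - t : ℕ) : Fin k) = i := by
      rw [hj, add_assoc, ← Nat.cast_add, Nat.add_sub_cancel' htk.le, Fin.natCast_self, add_zero]
    rw [hnj] at h₁
    rw [hji] at h₂
    rw [hdist_comm] at h₁ h₂
    omega

end BoundaryCycle

theorem stmt14_general (m k : ℕ) (hk : 3 ≤ k) (D C : Set (Finset (Fin m)))
    (hvc : VCdimLE D 2) (hCD : C ⊆ D) (hC : IsPC C)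
    (hcyc : Nonempty (((cubeGraph m).induce C) ≃g SimpleGraph.cycleGraph k))
    (hconv : convexHullIn D C = D) :
    {v | v ∈ D ∧ ∃ w ∈ D, convexHullIn D {v, w} = D} = C := by
  have : NeZero k := ⟨by omega⟩
  obtain ⟨φ⟩ := hcyc
  set c : Fin k → Finset (Fin m) := fun i => φ.symm i
  have hcD : ∀ i, c i ∈ D := fun i => hCD (φ.symm i).2
  have hcC : ∀ x (hx : x ∈ C), c (φ ⟨x, hx⟩) = x := fun x hx => by simp [c]
  have hstep : ∀ i, hdist (c i) (c (i + 1)) = 1 := hdist_symm_add_one (by omega) φ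
  obtain ⟨n, hn⟩ := even_of_hdist_add_one hstep
  have hanti : ∀ i, IsAntipodalIn D (c i) (c (i + n)) := fun i => by
    refine ⟨hcD i, hcD _, subset_hdistInterval_of_convexHullIn_eq hconv fun x hx => ?_⟩
    rw [← hcC x hx]
    exact mem_hdistInterval_of_hdist_add_one hstep hn
      ((cycDist_add_half hn i).symm.trans_le (cycDist_le_hdist hC φ i _)) _
  ext v
  refine ⟨fun ⟨hv, w, hw, hvw⟩ => ?_, fun hv => ?_⟩
  · obtain ⟨j, -, hj⟩ := exists_min_image univ (fun j => hdist v (c j)) univ_nonempty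
    have hne : c (j + 1) ≠ c (j - 1) := fun h =>
      Fin.add_one_ne_sub_one hk j (φ.symm.injective (Subtype.ext h))
    have hstep' : hdist (c j) (c (j - 1)) = 1 := by
      simpa [hdist_comm] using hstep (j - 1)
    rw [eq_of_isAntipodalIn_of_hdist_le hvc (isAntipodalIn_iff.mpr ⟨hv, hw, hvw⟩) (hanti j)
      (hanti (j + 1)) (hanti (j - 1)) (hstep j) hstep' hne (hj _ (mem_univ _)) (hj _ (mem_univ _))]
    exact (φ.symm j).2
  · rw [← hcC v hv]
    obtain ⟨hcv, hcw, hhull⟩ := isAntipodalIn_iff.mp (hanti (φ ⟨v, hv⟩))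
    exact ⟨hcv, _, hcw, hhull⟩

/-- In a pseudo-disk `D ∈ F(Q_3)` with boundary cycle `C`, the set of vertices
of `D` having an antipode in `D` is exactly `C`. -/
theorem stmt14 (m k : ℕ) (hk : 3 ≤ k) (D C : Set (Finset (Fin m)))
    (hD : IsPC D) (hvc : VCdimLE D 2) (hCD : C ⊆ D) (hC : IsPC C)
    (hcyc : Nonempty (((cubeGraph m).induce C) ≃g SimpleGraph.cycleGraph k))
    (hconv : convexHullIn D C = D) :
    {v | v ∈ D ∧ ∃ w ∈ D, convexHullIn D {v, w} = D} = C :=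
  stmt14_general m k hk D C hvc hCD hC hcyc hconv
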